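/- arXiv:1804.03597 — 2 statements merged into one kernel-verified Lean document; each statement's English description precedes it below -/
import Mathlib

section
/- The discrete delayed matrix exponential e_m^𝔇 satisfies the delayed difference equation e_m^𝔇(k+1) − e_m^𝔇(k) = D_k · e_m^𝔇(k−m) for all integers k ≥ 0. -/
open Finset Matrix

noncomputable def Pmat {n : ℕ} (D : ℤ → Matrix (Fin n) (Fin n) ℝ) (m : ℤ) :
    ℕ → ℤ → Matrix (Fin n) (Fin n) ℝ
  | 0, _ => 1
  | d + 1, k => ∑ j ∈ Finset.Icc ((d : ℤ) * (m + 1)) (k - 1), D j * Pmat D m d (j - m)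

/-- The discrete delayed matrix exponential `e_m^𝔇(k)`: zero for `k ≤ -m-1`,
the identity for `-m ≤ k ≤ 0`, and `I + ∑_{d=1}^{l} P^𝔇(k,d)` for
`(l-1)(m+1)+1 ≤ k ≤ l(m+1)`, where `l = ⌈k/(m+1)⌉ = (k+m)/(m+1)`. -/
noncomputable def delexp {n : ℕ} (D : ℤ → Matrix (Fin n) (Fin n) ℝ) (m : ℤ) (k : ℤ) :
    Matrix (Fin n) (Fin n) ℝ :=
  if k < -m then 0
  else if k ≤ 0 then 1
  else 1 + ∑ d ∈ Finset.Icc 1 ((k + m) / (m + 1)).toNat, Pmat D m d k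

/-!
Each `P(·, d + 1)` is a partial sum in `k`, so its forward difference at `k ≥ 0` is
`D k * P(k - m, d)`. Moreover `P(k, d + 1) = 0` for `k ≤ d (m + 1)`, so
`e_m(k) = I + ∑_{d < N} P(k, d + 1)` for every `N` with `k ≤ N (m + 1)`. Taking `N = k + 1` for
`e_m(k + 1)` and `e_m(k)`, and `N = k` for `e_m(k - m)`, whose `I` is the term `P(k - m, 0)`, the
identity follows termwise.
-/

section

variable {n : ℕ} (D : ℤ → Matrix (Fin n) (Fin n) ℝ) {m : ℤ}

theorem Pmat_succ_eq_zero {d : ℕ} {k : ℤ} (h : k ≤ d * (m + 1)) : Pmat D m (d + 1) k = 0 := by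
  rw [Pmat, Icc_eq_empty (by omega), sum_empty]

theorem Pmat_succ_sub_Pmat_succ (d : ℕ) {k : ℤ} (hk : 0 ≤ k) :
    Pmat D m (d + 1) (k + 1) - Pmat D m (d + 1) k = D k * Pmat D m d (k - m) := by
  by_cases hdk : (d : ℤ) * (m + 1) ≤ k
  · rw [Pmat, Pmat, add_sub_cancel_right, ← insert_Icc_sub_one_right_eq_Icc hdk,
      sum_insert (by simp), add_sub_cancel_right]
  · rw [Pmat_succ_eq_zero D (by omega), Pmat_succ_eq_zero D (by omega), sub_self]
    cases d with
    | zero => omega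
    | succ e => rw [Pmat_succ_eq_zero D (by push_cast at hdk ⊢; linarith), mul_zero]

variable (hm : 0 ≤ m)
include hm

theorem sum_range_Pmat_succ_congr {k : ℤ} {N N' : ℕ} (hN : k ≤ N * (m + 1))
    (hN' : k ≤ N' * (m + 1)) :
    ∑ d ∈ range N, Pmat D m (d + 1) k = ∑ d ∈ range N', Pmat D m (d + 1) k := by
  have vanish : ∀ {N : ℕ}, k ≤ N * (m + 1) → ∀ d ≥ N, Pmat D m (d + 1) k = 0 :=
    fun {N} hN d hd => Pmat_succ_eq_zero D <| hN.trans <| by gcongr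
  rcases le_total N N' with h | h
  · exact (eventually_constant_sum (vanish hN) h).symm
  · exact eventually_constant_sum (vanish hN') h

theorem delexp_eq_one_add_sum_range {k : ℤ} (hk : -m ≤ k) {N : ℕ} (hN : k ≤ N * (m + 1)) :
    delexp D m k = 1 + ∑ d ∈ range N, Pmat D m (d + 1) k := by
  rw [delexp, if_neg (by omega)]
  split_ifs with hk0
  · rw [sum_eq_zero fun d _ => Pmat_succ_eq_zero D (hk0.trans (by positivity)), add_zero]
  · set L := ((k + m) / (m + 1)).toNat
    have hL : k ≤ L * (m + 1) := by
      rw [Int.toNat_of_nonneg (Int.ediv_nonneg (by omega) (by omega))]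
      have := Int.lt_ediv_add_one_mul_self (k + m) (by omega : 0 < m + 1)
      linarith
    rw [← Ico_add_one_right_eq_Icc, sum_Ico_eq_sum_range, add_tsub_cancel_right]
    simp only [Nat.add_comm 1]
    rw [sum_range_Pmat_succ_congr D hm hL hN]

end

theorem delexp_delayed_difference {n : ℕ} (m : ℤ) (hm : 1 ≤ m)
    (D : ℤ → Matrix (Fin n) (Fin n) ℝ) :
    ∀ k : ℤ, 0 ≤ k →
      delexp D m (k + 1) - delexp D m k = D k * delexp D m (k - m) := by
  intro k hk
  obtain ⟨N, rfl⟩ := Int.eq_ofNat_of_zero_le hk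
  have hm0 : 0 ≤ m := by omega
  rw [delexp_eq_one_add_sum_range D hm0 (k := N + 1) (N := N + 1) (by omega)
      (by push_cast; nlinarith),
    delexp_eq_one_add_sum_range D hm0 (k := N) (N := N + 1) (by omega) (by push_cast; nlinarith),
    delexp_eq_one_add_sum_range D hm0 (k := N - m) (N := N) (by omega) (by nlinarith),
    add_sub_add_left_eq_sub, ← sum_sub_distrib]
  simp only [Pmat_succ_sub_Pmat_succ D _ hk]
  rw [← mul_sum, sum_range_succ', Pmat, add_comm]
end

section
/- For the constant permutable case (B_k = B, AB = BA, A invertible), the delayed exponential e_m^𝔇(k) for (l−1)(m+1)+1 ≤ k ≤ l(m+1) equals I + Σ_{d=1}^{l} A^{−d} B^d A^{−dm} C(k − (d−1)m, d), recovering the Diblík–Khusainov discrete matrix delayed exponential. -/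
/-! Since `A` commutes with `B`, the constant coefficient is `D = A⁻¹ B A⁻ᵐ = A^{-(m+1)} B`,
and the iterated sums defining `P^𝔇(k, d)` collapse: each level contributes one factor `D` and
the scalar weights obey the hockey-stick identity, so `P^𝔇(k, d) = C(k - (d-1)m, d) • Dᵈ`.
Finally `Dᵈ = A^{-d} Bᵈ A^{-dm}`, and for `k` in the `l`-th block of length `m + 1` the
upper summation limit `(k + m) / (m + 1) = ⌈k / (m + 1)⌉` equals `l`. -/

open Finset Matrix

/-- Integer power `A^k` of an invertible matrix. -/
noncomputable def Az {n : ℕ} {A : Matrix (Fin n) (Fin n) ℝ} (hA : IsUnit A) (k : ℤ) :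
    Matrix (Fin n) (Fin n) ℝ :=
  ((hA.unit ^ k : (Matrix (Fin n) (Fin n) ℝ)ˣ) : Matrix (Fin n) (Fin n) ℝ)

section IntegerPowers

variable {n : ℕ} {A B : Matrix (Fin n) (Fin n) ℝ} (hA : IsUnit A)

lemma Az_add (a b : ℤ) : Az hA (a + b) = Az hA a * Az hA b := by
  simp only [Az, _root_.zpow_add, Units.val_mul]

lemma Az_mul_natCast (t : ℤ) (d : ℕ) : Az hA (t * d) = Az hA t ^ d := by
  simp only [Az, _root_.zpow_mul, zpow_natCast, Units.val_pow_eq_pow_val]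

lemma Az_commute (hAB : A * B = B * A) (t : ℤ) : Commute (Az hA t) B :=
  (show Commute (hA.unit : Matrix (Fin n) (Fin n) ℝ) B by
    rw [hA.unit_spec]; exact hAB).units_zpow_left t

lemma Az_neg_one_mul_mul_Az_neg (hAB : A * B = B * A) (m : ℤ) :
    Az hA (-1) * B * Az hA (-m) = Az hA (-(m + 1)) * B := by
  rw [mul_assoc, ← (Az_commute hA hAB (-m)).eq, ← mul_assoc, ← Az_add, neg_add_rev]

lemma Az_neg_add_one_mul_pow (hAB : A * B = B * A) (m : ℤ) (d : ℕ) :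
    (Az hA (-(m + 1)) * B) ^ d = Az hA (-(d : ℤ)) * B ^ d * Az hA (-((d : ℤ) * m)) := by
  rw [(Az_commute hA hAB _).mul_pow, ← Az_mul_natCast, mul_assoc,
    ← ((Az_commute hA hAB (-((d : ℤ) * m))).pow_right d).eq, ← mul_assoc, ← Az_add]
  congr 2
  ring

end IntegerPowers

lemma sum_Icc_toNat_sub_choose (a : ℤ) (d : ℕ) (k : ℤ) :
    ∑ j ∈ Icc (a + d) (k - 1), (j - a).toNat.choose d = (k - a).toNat.choose (d + 1) := by
  rcases lt_or_ge k (a + d) with hk | hk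
  · rw [Icc_eq_empty (by omega), sum_empty, Nat.choose_eq_zero_of_lt (by omega)]
  induction k, hk using Int.leInduction with
  | base => rw [Icc_eq_empty (by omega), sum_empty, Nat.choose_eq_zero_of_lt (by omega)]
  | succ k hk ih =>
    rw [add_sub_cancel_right, ← insert_Icc_sub_one_right_eq_Icc hk, sum_insert (by simp), ih,
      show (k + 1 - a).toNat = (k - a).toNat + 1 by omega, Nat.choose_succ_succ, add_comm]

lemma Pmat_of_forall_eq {n : ℕ} {D : ℤ → Matrix (Fin n) (Fin n) ℝ}
    {C : Matrix (Fin n) (Fin n) ℝ} (hD : ∀ j, D j = C) (m : ℤ) (d : ℕ) (k : ℤ) :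
    Pmat D m d k = ((k - ((d : ℤ) - 1) * m).toNat.choose d : ℝ) • C ^ d := by
  induction d generalizing k with
  | zero => simp [Pmat]
  | succ d ih =>
    have hsummand (j : ℤ) :
        D j * Pmat D m d (j - m) = ((j - d * m).toNat.choose d : ℝ) • C ^ (d + 1) := by
      rw [hD, ih, mul_smul_comm, ← pow_succ']
      congr 4
      ring
    rw [Pmat, sum_congr rfl fun j _ => hsummand j, ← sum_smul, mul_add_one,
      ← Nat.cast_sum, sum_Icc_toNat_sub_choose]
    push_cast
    ring_nf

lemma add_ediv_add_one_eq {m l k : ℤ} (hk1 : (l - 1) * (m + 1) + 1 ≤ k)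
    (hk2 : k ≤ l * (m + 1)) :
    (k + m) / (m + 1) = l := by
  rw [Int.ediv_eq_iff_of_pos (by nlinarith)]
  constructor <;> nlinarith

theorem delexp_permutable_eq_Diblik_Khusainov_general {n : ℕ} (m : ℤ)
    (A B : Matrix (Fin n) (Fin n) ℝ) (hA : IsUnit A) (hAB : A * B = B * A)
    (D : ℤ → Matrix (Fin n) (Fin n) ℝ)
    (hD : ∀ k : ℤ, D k = Az hA (-1) * B * Az hA (-m))
    (l : ℤ) (hl : 1 ≤ l)
    (k : ℤ) (hk1 : (l - 1) * (m + 1) + 1 ≤ k) (hk2 : k ≤ l * (m + 1)) :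
    delexp D m k = 1 + ∑ d ∈ Finset.Icc 1 l.toNat,
      ((k - ((d : ℤ) - 1) * m).toNat.choose d : ℝ) •
        (Az hA (-(d : ℤ)) * B ^ d * Az hA (-((d : ℤ) * m))) := by
  have hm : 0 ≤ m := by linarith
  have hk : 0 < k := by nlinarith
  rw [delexp, if_neg (by omega), if_neg (by omega), add_ediv_add_one_eq hk1 hk2]
  simp_rw [Az_neg_one_mul_mul_Az_neg hA hAB] at hD
  simp_rw [Pmat_of_forall_eq hD, Az_neg_add_one_mul_pow hA hAB]

theorem delexp_permutable_eq_Diblik_Khusainov {n : ℕ} (m : ℤ) (hm : 1 ≤ m)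
    (A B : Matrix (Fin n) (Fin n) ℝ) (hA : IsUnit A) (hAB : A * B = B * A)
    (D : ℤ → Matrix (Fin n) (Fin n) ℝ)
    (hD : ∀ k : ℤ, D k = Az hA (-1) * B * Az hA (-m))
    (l : ℤ) (hl : 1 ≤ l)
    (k : ℤ) (hk1 : (l - 1) * (m + 1) + 1 ≤ k) (hk2 : k ≤ l * (m + 1)) :
    delexp D m k = 1 + ∑ d ∈ Finset.Icc 1 l.toNat,
      ((k - ((d : ℤ) - 1) * m).toNat.choose d : ℝ) •
        (Az hA (-(d : ℤ)) * B ^ d * Az hA (-((d : ℤ) * m))) :=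
  delexp_permutable_eq_Diblik_Khusainov_general m A B hA hAB D hD l hl k hk1 hk2
end
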